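/- On the interior of any knot interval, the derivative of a B-spline basis function of degree p ≥ 1 satisfies N′_{i,p}(ξ) = (p/(ξ_{i+p} − ξ_i)) N_{i,p−1}(ξ) − (p/(ξ_{i+p+1} − ξ_{i+1})) N_{i+1,p−1}(ξ), where any term whose denominator is zero is taken to be 0; that is, this identity holds at every ξ lying in some open knot interval (ξ_j, ξ_{j+1}). -/

import Mathlib

/-!
Induction on the degree. In degree `0`, a point `x` strictly inside a knot interval
`(ξ_j, ξ_{j+1})` is not a knot, so `N_{i,0}` is locally constant (`1` exactly for `i = j`)
and has derivative `0`, which is also the value of the formula. In degree `p + 1`,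
differentiate the Cox–de Boor recursion with the product rule and substitute the formula
for `N'_{i,p}`, `N'_{i+1,p}`; expanding once more with the recursion, the claim reduces to
an identity in which only the coefficient of `N_{i+1,p-1}` is non-trivial, and it
collapses because `ξ_i ≤ ξ_{i+1} ≤ ξ_{i+p+1} ≤ ξ_{i+p+2}`.
-/

/-- The B-spline basis functions `N_{i,p}` associated with a knot vector `ξ`,
defined by the Cox–de Boor recursion.  Terms with a zero denominator vanish
automatically since division by zero yields `0` in Lean. -/
noncomputable def bspline (ξ : ℤ → ℝ) : ℕ → ℤ → ℝ → ℝ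
  | 0 => fun i t => if ξ i ≤ t ∧ t < ξ (i + 1) then 1 else 0
  | p + 1 => fun i t =>
      (t - ξ i) / (ξ (i + (p : ℤ) + 1) - ξ i) * bspline ξ p i t
        + (ξ (i + (p : ℤ) + 2) - t) / (ξ (i + (p : ℤ) + 2) - ξ (i + 1)) *
            bspline ξ p (i + 1) t

noncomputable def bsplineDeriv (ξ : ℤ → ℝ) (p : ℕ) (i : ℤ) (x : ℝ) : ℝ :=
  (p : ℝ) / (ξ (i + (p : ℤ)) - ξ i) * bspline ξ (p - 1) i x
    - (p : ℝ) / (ξ (i + (p : ℤ) + 1) - ξ (i + 1)) * bspline ξ (p - 1) (i + 1) x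

lemma inv_sub_mul_div_self_of_Icc_subset {a b c d : ℝ} (hab : a ≤ b) (hbc : b ≤ c)
    (hcd : c ≤ d) : (c - b)⁻¹ * ((d - a) / (d - a)) = (c - b)⁻¹ := by
  rcases hbc.eq_or_lt with rfl | hbc
  · simp
  · rw [div_self (by linarith), mul_one]

namespace bspline

variable {ξ : ℤ → ℝ}

lemma succ_apply (p : ℕ) (i : ℤ) (t : ℝ) :
    bspline ξ (p + 1) i t =
      (t - ξ i) / (ξ (i + p + 1) - ξ i) * bspline ξ p i t
        + (ξ (i + p + 2) - t) / (ξ (i + p + 2) - ξ (i + 1)) * bspline ξ p (i + 1) t :=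
  rfl

lemma zero_apply_of_mem_Ioo (hξ : Monotone ξ) {i j : ℤ} {t : ℝ}
    (ht : t ∈ Set.Ioo (ξ j) (ξ (j + 1))) : bspline ξ 0 i t = if i = j then 1 else 0 := by
  simp only [bspline]
  split_ifs with hN hij hij
  · rfl
  · exfalso
    rcases lt_or_gt_of_ne hij with h | h
    · linarith [ht.1, hN.2, hξ (show i + 1 ≤ j by omega)]
    · linarith [ht.2, hN.1, hξ (show j + 1 ≤ i by omega)]
  · subst hij
    exact absurd ⟨ht.1.le, ht.2⟩ hN
  · rfl

lemma hasDerivAt_zero (hξ : Monotone ξ) (i : ℤ) {j : ℤ} {x : ℝ}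
    (hx : x ∈ Set.Ioo (ξ j) (ξ (j + 1))) : HasDerivAt (bspline ξ 0 i) 0 x := by
  refine (hasDerivAt_const x (bspline ξ 0 i x)).congr_of_eventuallyEq ?_
  filter_upwards [Ioo_mem_nhds hx.1 hx.2] with t ht
  rw [zero_apply_of_mem_Ioo hξ ht, zero_apply_of_mem_Ioo hξ hx]

end bspline

namespace bsplineDeriv

variable {ξ : ℤ → ℝ}

@[simp]
lemma zero (i : ℤ) (x : ℝ) : bsplineDeriv ξ 0 i x = 0 := by
  simp [bsplineDeriv]

lemma succ (p : ℕ) (i : ℤ) (x : ℝ) :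
    bsplineDeriv ξ (p + 1) i x =
      (p + 1) / (ξ (i + p + 1) - ξ i) * bspline ξ p i x
        - (p + 1) / (ξ (i + p + 2) - ξ (i + 1)) * bspline ξ p (i + 1) x := by
  simp only [bsplineDeriv, Nat.cast_add, Nat.cast_one, add_tsub_cancel_right, ← add_assoc]
  ring_nf

lemma cox_de_boor_combination (hξ : Monotone ξ) (p : ℕ) (i : ℤ) (x : ℝ) :
    (x - ξ i) / (ξ (i + p + 1) - ξ i) * bsplineDeriv ξ p i x
      + (ξ (i + p + 2) - x) / (ξ (i + p + 2) - ξ (i + 1)) * bsplineDeriv ξ p (i + 1) x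
      = p / (ξ (i + p + 1) - ξ i) * bspline ξ p i x
        - p / (ξ (i + p + 2) - ξ (i + 1)) * bspline ξ p (i + 1) x := by
  cases p with
  | zero => simp
  | succ q =>
    simp only [succ, bspline.succ_apply]
    rw [show i + ((q + 1 : ℕ) : ℤ) + 1 = i + q + 2 by push_cast; ring,
      show i + ((q + 1 : ℕ) : ℤ) + 2 = i + q + 3 by push_cast; ring,
      show i + 1 + (q : ℤ) + 1 = i + q + 2 by ring, show i + 1 + (q : ℤ) + 2 = i + q + 3 by ring,
      show i + 1 + 1 = i + 2 by ring]
    have h₁ := inv_sub_mul_div_self_of_Icc_subset (hξ (show i ≤ i + 1 by omega))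
      (hξ (show i + 1 ≤ i + q + 2 by omega)) le_rfl
    have h₂ := inv_sub_mul_div_self_of_Icc_subset le_rfl
      (hξ (show i + 1 ≤ i + q + 2 by omega)) (hξ (show i + q + 2 ≤ i + q + 3 by omega))
    push_cast
    linear_combination (↑q + 1) * bspline ξ q (i + 1) x * (h₂ - h₁)

end bsplineDeriv

lemma bspline.hasDerivAt {ξ : ℤ → ℝ} (hξ : Monotone ξ) {j : ℤ} {x : ℝ}
    (hx : x ∈ Set.Ioo (ξ j) (ξ (j + 1))) :
    ∀ (p : ℕ) (i : ℤ), HasDerivAt (bspline ξ p i) (bsplineDeriv ξ p i x) x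
  | 0, i => by simpa using hasDerivAt_zero hξ i hx
  | p + 1, i => by
    have hleft := (((hasDerivAt_id' x).sub_const (ξ i)).div_const (ξ (i + p + 1) - ξ i)).mul
      (bspline.hasDerivAt hξ hx p i)
    have hright := (((hasDerivAt_id' x).const_sub (ξ (i + p + 2))).div_const
      (ξ (i + p + 2) - ξ (i + 1))).mul (bspline.hasDerivAt hξ hx p (i + 1))
    refine (hleft.add hright).congr_deriv ?_
    rw [bsplineDeriv.succ]
    linear_combination bsplineDeriv.cox_de_boor_combination hξ p i x

theorem bspline_deriv_general (ξ : ℤ → ℝ) (hξ : Monotone ξ) (p : ℕ)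
    (i : ℤ) (x : ℝ) (j : ℤ) (hx : x ∈ Set.Ioo (ξ j) (ξ (j + 1))) :
    HasDerivAt (bspline ξ p i)
      ((p : ℝ) / (ξ (i + (p : ℤ)) - ξ i) * bspline ξ (p - 1) i x
        - (p : ℝ) / (ξ (i + (p : ℤ) + 1) - ξ (i + 1)) * bspline ξ (p - 1) (i + 1) x)
      x :=
  bspline.hasDerivAt hξ hx p i

/-- on the interior of any knot interval, the derivative of a
B-spline basis function of degree `p ≥ 1` satisfies
`N'_{i,p}(t) = p/(ξ_{i+p} - ξ_i) · N_{i,p-1}(t) - p/(ξ_{i+p+1} - ξ_{i+1}) · N_{i+1,p-1}(t)`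
(terms with zero denominator vanish, since division by zero yields `0`). -/
theorem bspline_deriv (ξ : ℤ → ℝ) (hξ : Monotone ξ) (p : ℕ) (hp : 1 ≤ p)
    (i : ℤ) (x : ℝ) (j : ℤ) (hx : x ∈ Set.Ioo (ξ j) (ξ (j + 1))) :
    HasDerivAt (bspline ξ p i)
      ((p : ℝ) / (ξ (i + (p : ℤ)) - ξ i) * bspline ξ (p - 1) i x
        - (p : ℝ) / (ξ (i + (p : ℤ) + 1) - ξ (i + 1)) * bspline ξ (p - 1) (i + 1) x)
      x :=
  bspline_deriv_general ξ hξ p i x j hx
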